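/- The function H(y,z) = z₁z₂ + z₁z₃ + z₂z₃ − y₁² + 2y₁y₂ − y₂² + 2y₁y₃ + 2y₂y₃ − y₃² is a first integral of the system ẏᵢ = yᵢzᵢ, żᵢ = (yⱼ − yₖ)² − yᵢ² (where (i,j,k) ranges over cyclic permutations of (1,2,3)); that is, the derivative of H along solutions vanishes identically: Σᵢ (∂H/∂yᵢ)·yᵢzᵢ + Σᵢ (∂H/∂zᵢ)·((yⱼ−yₖ)² − yᵢ²) = 0 for all (y,z) ∈ ℝ⁶. -/
import Mathlib


open MvPolynomial

/-- Variables: `0,1,2` are `y₁,y₂,y₃` and `3,4,5` are `z₁,z₂,z₃`. -/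
noncomputable def bianchiH : MvPolynomial (Fin 6) ℝ :=
  X 3 * X 4 + X 3 * X 5 + X 4 * X 5
    - (X 0)^2 + 2 * X 0 * X 1 - (X 1)^2 + 2 * X 0 * X 2 + 2 * X 1 * X 2 - (X 2)^2

/-- The `y`-components of the vector field: `ẏᵢ = yᵢ zᵢ`. -/
noncomputable def bianchiYdot (i : Fin 3) : MvPolynomial (Fin 6) ℝ :=
  X (Fin.castAdd 3 i) * X (Fin.natAdd 3 i)

/-- The `z`-components of the vector field: `żᵢ = (yⱼ - yₖ)² - yᵢ²`
for `(i,j,k)` a cyclic permutation of `(1,2,3)`. -/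
noncomputable def bianchiZdot : Fin 3 → MvPolynomial (Fin 6) ℝ :=
  ![(X 1 - X 2)^2 - (X 0)^2,
    (X 2 - X 0)^2 - (X 1)^2,
    (X 0 - X 1)^2 - (X 2)^2]

set_option maxHeartbeats 1000000 in
theorem stmt_5 :
    (∑ i : Fin 3, pderiv (Fin.castAdd 3 i) bianchiH * bianchiYdot i)
      + (∑ i : Fin 3, pderiv (Fin.natAdd 3 i) bianchiH * bianchiZdot i) = 0 := by
  have p2 : ∀ i : Fin 6, pderiv i (2 : MvPolynomial (Fin 6) ℝ) = 0 := by
    intro i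
    rw [show (2 : MvPolynomial (Fin 6) ℝ) = C 2 from (map_ofNat C 2).symm, pderiv_C]
  have c0 : Fin.castAdd 3 (0 : Fin 3) = (0 : Fin 6) := rfl
  have c1 : Fin.castAdd 3 (1 : Fin 3) = (1 : Fin 6) := rfl
  have c2 : Fin.castAdd 3 (2 : Fin 3) = (2 : Fin 6) := rfl
  have n0 : Fin.natAdd 3 (0 : Fin 3) = (3 : Fin 6) := rfl
  have n1 : Fin.natAdd 3 (1 : Fin 3) = (4 : Fin 6) := rfl
  have n2 : Fin.natAdd 3 (2 : Fin 3) = (5 : Fin 6) := rfl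
  have h0 : pderiv (0 : Fin 6) bianchiH = -2 * X 0 + 2 * X 1 + 2 * X 2 := by
    simp only [bianchiH, map_add, map_sub, map_mul, pderiv_X, Derivation.leibniz_pow,
      Pi.single_apply, pderiv_C, p2]
    simp [Pi.single_apply, p2]; try ring
  have h1 : pderiv (1 : Fin 6) bianchiH = 2 * X 0 - 2 * X 1 + 2 * X 2 := by
    simp only [bianchiH, map_add, map_sub, map_mul, pderiv_X, Derivation.leibniz_pow,
      Pi.single_apply, pderiv_C, p2]
    simp [Pi.single_apply, p2]; try ring
  have h2 : pderiv (2 : Fin 6) bianchiH = 2 * X 0 + 2 * X 1 - 2 * X 2 := by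
    simp only [bianchiH, map_add, map_sub, map_mul, pderiv_X, Derivation.leibniz_pow,
      Pi.single_apply, pderiv_C, p2]
    simp [Pi.single_apply, p2]; try ring
  have h3 : pderiv (3 : Fin 6) bianchiH = X 4 + X 5 := by
    simp only [bianchiH, map_add, map_sub, map_mul, pderiv_X, Derivation.leibniz_pow,
      Pi.single_apply, pderiv_C, p2]
    simp [Pi.single_apply, p2]; try ring
  have h4 : pderiv (4 : Fin 6) bianchiH = X 3 + X 5 := by
    simp only [bianchiH, map_add, map_sub, map_mul, pderiv_X, Derivation.leibniz_pow,
      Pi.single_apply, pderiv_C, p2]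
    simp [Pi.single_apply, p2]; try ring
  have h5 : pderiv (5 : Fin 6) bianchiH = X 3 + X 4 := by
    simp only [bianchiH, map_add, map_sub, map_mul, pderiv_X, Derivation.leibniz_pow,
      Pi.single_apply, pderiv_C, p2]
    simp [Pi.single_apply, p2]; try ring
  simp only [Fin.sum_univ_three, bianchiYdot, bianchiZdot,
    c0, c1, c2, n0, n1, n2, Matrix.cons_val_zero, Matrix.cons_val_one, Matrix.head_cons,
    Matrix.cons_val_two, Matrix.tail_cons, h0, h1, h2, h3, h4, h5]
  ring
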